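/- arXiv:2512.04268 — 4 statements merged into one kernel-verified Lean document; each statement's English description precedes it below -/
import Mathlib

section
/- In the linear regression data model, for every i ∈ {1,…,d} the expectation of ŵ[i]·G equals the (d+1)×(d+1) block matrix [[w⋆[i]·I_d, w⋆[i]·w⋆ + e_i],[(w⋆[i]·w⋆ + e_i)^T, w⋆[i]·(‖w⋆‖² + d + 2)]], where e_i ∈ ℝ^d is the i-th standard basis vector. -/
open Matrix MeasureTheory ProbabilityTheory

/-- The empirical second-moment matrix `G = (1/C) ∑_j z_j z_jᵀ ∈ ℝ^{(d+1)×(d+1)}`, where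
`z_j = (x_j; y_j)` and `y_j = ŵᵀ x_j`. -/
noncomputable def Gmat (d C : ℕ) (w : Fin d → ℝ) (xs : Fin C → Fin d → ℝ) :
    Matrix (Fin d ⊕ Unit) (Fin d ⊕ Unit) ℝ :=
  (C : ℝ)⁻¹ • ∑ j : Fin C,
    vecMulVec (Sum.elim (xs j) fun _ : Unit => w ⬝ᵥ xs j)
      (Sum.elim (xs j) fun _ : Unit => w ⬝ᵥ xs j)

/-- The `(d+1)×(d+1)` block matrix
`[[w⋆[i]·I_d, w⋆[i]·w⋆ + e_i],[(w⋆[i]·w⋆ + e_i)ᵀ, w⋆[i]·(‖w⋆‖² + d + 2)]]`. -/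
noncomputable def blockN (d : ℕ) (wstar : EuclideanSpace ℝ (Fin d)) (i : Fin d) :
    Matrix (Fin d ⊕ Unit) (Fin d ⊕ Unit) ℝ :=
  Matrix.fromBlocks (wstar i • (1 : Matrix (Fin d) (Fin d) ℝ))
    (Matrix.of fun k (_ : Unit) => wstar i * wstar k + (Pi.single i 1 : Fin d → ℝ) k)
    (Matrix.of fun (_ : Unit) k => wstar i * wstar k + (Pi.single i 1 : Fin d → ℝ) k)
    (Matrix.of fun (_ : Unit) (_ : Unit) => wstar i * (‖wstar‖ ^ 2 + d + 2))


section Aux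
open Real

set_option linter.unusedSectionVars false
set_option linter.unusedVariables false

noncomputable def sq2pi : ℝ := Real.sqrt (2 * π)

lemma sq2pi_pos : 0 < sq2pi := Real.sqrt_pos.2 (by positivity)

lemma L_int (n : ℕ) : Integrable (fun x : ℝ => x ^ n * Real.exp (-x ^ 2 / 2)) := by
  have h := integrable_rpow_mul_exp_neg_mul_sq (b := 1/2) (by norm_num)
    (s := (n : ℝ)) (lt_of_lt_of_le neg_one_lt_zero (Nat.cast_nonneg n))
  have : (fun x : ℝ => x ^ (n : ℝ) * rexp (-(1/2) * x ^ 2))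
      = fun x : ℝ => x ^ n * Real.exp (-x ^ 2 / 2) := by
    funext x
    rw [Real.rpow_natCast]
    ring_nf
  rwa [this] at h

lemma L0 : ∫ x : ℝ, Real.exp (-x ^ 2 / 2) = sq2pi := by
  have h := integral_gaussian (1/2)
  have : (fun x : ℝ => rexp (-(1/2) * x ^ 2)) = fun x : ℝ => Real.exp (-x ^ 2 / 2) := by
    funext x; ring_nf
  rw [this] at h
  rw [h, sq2pi]
  rw [show (2:ℝ)*π = π/(1/2) by ring]

lemma Lodd (n : ℕ) (hn : Odd n) : ∫ x : ℝ, x ^ n * Real.exp (-x ^ 2 / 2) = 0 := by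
  have h := integral_neg_eq_self (fun x : ℝ => x ^ n * Real.exp (-x ^ 2 / 2)) volume
  have h2 : ∀ x : ℝ, (-x) ^ n * Real.exp (-(-x) ^ 2 / 2)
      = -(x ^ n * Real.exp (-x ^ 2 / 2)) := by
    intro x
    rw [hn.neg_pow, neg_sq]
    ring
  simp_rw [h2, integral_neg] at h
  linarith

lemma L2 : ∫ x : ℝ, x ^ 2 * Real.exp (-x ^ 2 / 2) = sq2pi := by
  have hu : ∀ x : ℝ, HasDerivAt (fun y : ℝ => y) 1 x := fun x => hasDerivAt_id x
  have hv : ∀ x : ℝ, HasDerivAt (fun y : ℝ => Real.exp (-y ^ 2 / 2))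
      (-x * Real.exp (-x ^ 2 / 2)) x := by
    intro x
    have h1 : HasDerivAt (fun y : ℝ => -y ^ 2 / 2) (-x) x := by
      have : HasDerivAt (fun y : ℝ => -y ^ 2 / 2) (-((2 : ℕ) * x ^ (2 - 1)) / 2) x :=
        ((hasDerivAt_pow 2 x).neg).div_const 2
      convert this using 1
      push_cast; ring
    have := h1.exp
    convert this using 1
    ring
  have key := integral_mul_deriv_eq_deriv_mul_of_integrable (fun x _ => hu x) (fun x _ => hv x) ?_ ?_ ?_
  · have e1 : ∫ x : ℝ, x * (-x * Real.exp (-x ^ 2 / 2))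
        = -∫ x : ℝ, x ^ 2 * Real.exp (-x ^ 2 / 2) := by
      rw [← integral_neg]
      congr 1; funext x; ring
    have e2 : ∫ x : ℝ, (1 : ℝ) * Real.exp (-x ^ 2 / 2) = sq2pi := by
      simp_rw [one_mul]; exact L0
    rw [e1, e2] at key
    linarith
  · have := (L_int 2).neg
    refine this.congr (Filter.Eventually.of_forall fun x => ?_)
    simp [Pi.mul_apply]; ring
  · have := L_int 0
    refine this.congr (Filter.Eventually.of_forall fun x => ?_)
    simp [Pi.mul_apply]
  · have := L_int 1
    refine this.congr (Filter.Eventually.of_forall fun x => ?_)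
    simp [Pi.mul_apply]

lemma pdf01 (x : ℝ) : gaussianPDFReal 0 1 x = sq2pi⁻¹ * Real.exp (-x ^ 2 / 2) := by
  simp [gaussianPDFReal, sq2pi]

lemma gauss01_eq : gaussianReal 0 1
    = volume.withDensity (fun x => ((Real.toNNReal (gaussianPDFReal 0 1 x)) : ENNReal)) := by
  rw [gaussianReal_of_var_ne_zero _ one_ne_zero]
  rfl

lemma int_gauss01 (f : ℝ → ℝ) :
    ∫ x, f x ∂(gaussianReal 0 1) = sq2pi⁻¹ * ∫ x, f x * Real.exp (-x ^ 2 / 2) := by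
  rw [gauss01_eq, integral_withDensity_eq_integral_smul
    (measurable_gaussianPDFReal 0 1).real_toNNReal f]
  rw [← integral_const_mul]
  congr 1
  funext x
  rw [NNReal.smul_def, Real.coe_toNNReal _ (gaussianPDFReal_nonneg 0 1 x), pdf01, smul_eq_mul]
  ring

lemma integrable_gauss01_pow (n : ℕ) :
    Integrable (fun x : ℝ => x ^ n) (gaussianReal 0 1) := by
  rw [gauss01_eq, integrable_withDensity_iff
    ((measurable_gaussianPDFReal 0 1).real_toNNReal.coe_nnreal_ennreal)
    (Filter.Eventually.of_forall fun x => ENNReal.coe_lt_top)]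
  refine ((L_int n).const_mul sq2pi⁻¹).congr (Filter.Eventually.of_forall fun x => ?_)
  have h : ((((gaussianPDFReal 0 1 x).toNNReal : ENNReal)).toReal) = sq2pi⁻¹ * Real.exp (-x ^ 2 / 2) := by
    rw [ENNReal.coe_toReal, Real.coe_toNNReal _ (gaussianPDFReal_nonneg 0 1 x), pdf01]
  simp only [h]
  ring

lemma ipow1 : Integrable (fun x : ℝ => x) (gaussianReal 0 1) := by
  simpa using integrable_gauss01_pow 1

lemma m01_1 : ∫ x, x ∂(gaussianReal 0 1) = 0 := by
  rw [int_gauss01]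
  have : ∫ x : ℝ, x * Real.exp (-x ^ 2 / 2) = 0 := by
    simpa [pow_one] using Lodd 1 odd_one
  rw [this, mul_zero]

lemma m01_2 : ∫ x, x ^ 2 ∂(gaussianReal 0 1) = 1 := by
  rw [int_gauss01, L2, inv_mul_cancel₀ sq2pi_pos.ne']

lemma m01_3 : ∫ x, x ^ 3 ∂(gaussianReal 0 1) = 0 := by
  rw [int_gauss01, Lodd 3 ⟨1, by norm_num⟩, mul_zero]

lemma gaussm_eq (m : ℝ) : gaussianReal m 1 = (gaussianReal 0 1).map (· + m) := by
  rw [gaussianReal_map_add_const m, zero_add]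

lemma integrable_gauss_pow (m : ℝ) (n : ℕ) :
    Integrable (fun x : ℝ => x ^ n) (gaussianReal m 1) := by
  rw [gaussm_eq m, integrable_map_measure
    (Measurable.aestronglyMeasurable (by fun_prop)) (by fun_prop)]
  have : ((fun x : ℝ => x ^ n) ∘ (· + m)) = fun x : ℝ =>
      ∑ k ∈ Finset.range (n + 1), x ^ k * (m ^ (n - k) * (n.choose k : ℝ)) := by
    funext x
    simp only [Function.comp, add_pow]
    exact Finset.sum_congr rfl fun k _ => by ring
  rw [this]
  exact integrable_finset_sum _ fun k _ => (integrable_gauss01_pow k).mul_const _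

lemma m_1 (m : ℝ) : ∫ x, x ∂(gaussianReal m 1) = m := by
  rw [gaussm_eq m, integral_map (by fun_prop) (Measurable.aestronglyMeasurable (by fun_prop))]
  rw [integral_add ipow1 (integrable_const m), m01_1, integral_const]
  simp

lemma m_2 (m : ℝ) : ∫ x, x ^ 2 ∂(gaussianReal m 1) = m ^ 2 + 1 := by
  rw [gaussm_eq m, integral_map (by fun_prop) (Measurable.aestronglyMeasurable (by fun_prop))]
  have e : ∀ x : ℝ, (x + m) ^ 2 = x ^ 2 + (2 * m * x + m ^ 2) := by intro x; ring
  simp_rw [e]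
  have i1 : Integrable (fun x : ℝ => 2 * m * x) (gaussianReal 0 1) := ipow1.const_mul _
  have ig : Integrable (fun x : ℝ => 2 * m * x + m ^ 2) (gaussianReal 0 1) :=
    i1.add (integrable_const _)
  rw [integral_add (integrable_gauss01_pow 2) ig,
    integral_add i1 (integrable_const _), integral_const_mul, m01_1, m01_2, integral_const]
  simp
  ring

lemma m_3 (m : ℝ) : ∫ x, x ^ 3 ∂(gaussianReal m 1) = m ^ 3 + 3 * m := by
  rw [gaussm_eq m, integral_map (by fun_prop) (Measurable.aestronglyMeasurable (by fun_prop))]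
  have e : ∀ x : ℝ, (x + m) ^ 3 = x ^ 3 + (3 * m * x ^ 2 + (3 * m ^ 2 * x + m ^ 3)) := by
    intro x; ring
  simp_rw [e]
  have i1 : Integrable (fun x : ℝ => 3 * m ^ 2 * x) (gaussianReal 0 1) := ipow1.const_mul _
  have i2 : Integrable (fun x : ℝ => 3 * m * x ^ 2) (gaussianReal 0 1) :=
    (integrable_gauss01_pow 2).const_mul _
  have ig1 : Integrable (fun x : ℝ => 3 * m ^ 2 * x + m ^ 3) (gaussianReal 0 1) :=
    i1.add (integrable_const _)
  have ig2 : Integrable (fun x : ℝ => 3 * m * x ^ 2 + (3 * m ^ 2 * x + m ^ 3)) (gaussianReal 0 1) :=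
    i2.add ig1
  rw [integral_add (integrable_gauss01_pow 3) ig2,
    integral_add i2 ig1, integral_add i1 (integrable_const _),
    m01_3, integral_const_mul, integral_const_mul, m01_1, m01_2, integral_const]
  simp
  ring

lemma iid (m : ℝ) : Integrable (fun u : ℝ => u) (gaussianReal m 1) := by
  simpa using integrable_gauss_pow m 1

lemma iuu (m : ℝ) : Integrable (fun u : ℝ => u * u) (gaussianReal m 1) := by
  simpa [pow_two] using integrable_gauss_pow m 2

lemma iuuu (m : ℝ) : Integrable (fun u : ℝ => u * (u * u)) (gaussianReal m 1) :=
  (integrable_gauss_pow m 3).congr (Filter.Eventually.of_forall fun u => by ring)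

lemma muu (m : ℝ) : ∫ u, u * u ∂(gaussianReal m 1) = m ^ 2 + 1 := by
  have h : (fun u : ℝ => u * u) = fun u : ℝ => u ^ 2 := funext fun u => (pow_two u).symm
  rw [h]
  exact m_2 m

lemma muuu (m : ℝ) : ∫ u, u * (u * u) ∂(gaussianReal m 1) = m ^ 3 + 3 * m := by
  have h : (fun u : ℝ => u * (u * u)) = fun u : ℝ => u ^ 3 := funext fun u => by ring
  rw [h]
  exact m_3 m

end Aux

section PiLemmas

set_option linter.unusedSectionVars false
set_option linter.unusedVariables false

variable {ι : Type*} [Fintype ι] [DecidableEq ι] {E : ι → Type*} [∀ i, MeasurableSpace (E i)]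
  (μ : ∀ i, Measure (E i)) [∀ i, IsProbabilityMeasure (μ i)]

lemma my_integral_pi (f : ∀ i, E i → ℝ) :
    ∫ x, ∏ i, f i (x i) ∂(Measure.pi μ) = ∏ i, ∫ t, f i t ∂(μ i) := by
  letI : ∀ i, MeasureSpace (E i) := fun i => ⟨μ i⟩
  exact integral_fintype_prod_eq_prod f

lemma my_integrable_pi (f : ∀ i, E i → ℝ) (hf : ∀ i, Integrable (f i) (μ i)) :
    Integrable (fun x => ∏ i, f i (x i)) (Measure.pi μ) := by
  letI : ∀ i, MeasureSpace (E i) := fun i => ⟨μ i⟩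
  exact Integrable.fintype_prod_dep hf

variable (i k : ι)

/-- one-coordinate factor family -/
def Fone (f : E i → ℝ) : ∀ t, E t → ℝ := fun t u => if h : t = i then f (h ▸ u) else 1

lemma Fone_prod (f : E i → ℝ) (x : ∀ t, E t) : ∏ t, Fone i f t (x t) = f (x i) := by
  rw [Finset.prod_eq_single_of_mem i (Finset.mem_univ i)]
  · simp [Fone]
  · intro t _ ht; simp [Fone, ht]

lemma Fone_integrable (f : E i → ℝ) (hf : Integrable f (μ i)) (t : ι) :
    Integrable (Fone i f t) (μ t) := by
  unfold Fone
  by_cases h : t = i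
  · subst h; simpa using hf
  · simp only [dif_neg h]; exact integrable_const (1 : ℝ)

lemma integral_pi_one (f : E i → ℝ) (hf : Integrable f (μ i)) :
    ∫ x, f (x i) ∂(Measure.pi μ) = ∫ t, f t ∂(μ i) := by
  have h : (fun x : ∀ t, E t => f (x i)) = fun x => ∏ t, Fone i f t (x t) :=
    funext fun x => (Fone_prod i f x).symm
  rw [h, my_integral_pi]
  rw [Finset.prod_eq_single_of_mem i (Finset.mem_univ i)]
  · simp [Fone]
  · intro t _ ht
    simp [Fone, ht]

lemma integrable_pi_one (f : E i → ℝ) (hf : Integrable f (μ i)) :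
    Integrable (fun x : ∀ t, E t => f (x i)) (Measure.pi μ) := by
  have h : (fun x : ∀ t, E t => f (x i)) = fun x => ∏ t, Fone i f t (x t) :=
    funext fun x => (Fone_prod i f x).symm
  rw [h]
  exact my_integrable_pi μ _ (Fone_integrable μ i f hf)

/-- two-coordinate factor family -/
def Ftwo (f : E i → ℝ) (g : E k → ℝ) : ∀ t, E t → ℝ := fun t u =>
  (if h : t = i then f (h ▸ u) else 1) * (if h : t = k then g (h ▸ u) else 1)

lemma Ftwo_prod (hik : i ≠ k) (f : E i → ℝ) (g : E k → ℝ) (x : ∀ t, E t) :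
    ∏ t, Ftwo i k f g t (x t) = f (x i) * g (x k) := by
  unfold Ftwo
  rw [Finset.prod_mul_distrib]
  congr 1
  · exact Fone_prod i f x
  · exact Fone_prod k g x

lemma Ftwo_integrable (hik : i ≠ k) (f : E i → ℝ) (g : E k → ℝ)
    (hf : Integrable f (μ i)) (hg : Integrable g (μ k)) (t : ι) :
    Integrable (Ftwo i k f g t) (μ t) := by
  unfold Ftwo
  by_cases h : t = i
  · subst h
    have h2 : t ≠ k := hik
    simp only [dif_pos rfl, dif_neg h2, mul_one]
    simpa using hf
  · by_cases h2 : t = k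
    · subst h2
      simp only [dif_neg h, dif_pos rfl, one_mul]
      simpa using hg
    · simp only [dif_neg h, dif_neg h2, mul_one]
      exact integrable_const (1 : ℝ)

lemma integral_pi_two (hik : i ≠ k) (f : E i → ℝ) (g : E k → ℝ)
    (hf : Integrable f (μ i)) (hg : Integrable g (μ k)) :
    ∫ x, f (x i) * g (x k) ∂(Measure.pi μ) = (∫ t, f t ∂(μ i)) * ∫ t, g t ∂(μ k) := by
  have h : (fun x : ∀ t, E t => f (x i) * g (x k)) = fun x => ∏ t, Ftwo i k f g t (x t) :=
    funext fun x => (Ftwo_prod i k hik f g x).symm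
  rw [h, my_integral_pi]
  have key : ∀ t, ∫ u, Ftwo i k f g t u ∂(μ t)
      = (∫ u, Fone i f t u ∂(μ t)) * ∫ u, Fone k g t u ∂(μ t) := by
    intro t
    unfold Ftwo Fone
    by_cases h1 : t = i
    · subst h1
      have h2 : t ≠ k := hik
      simp [h2]
    · by_cases h2 : t = k
      · subst h2
        simp [h1]
      · simp [h1, h2]
  simp_rw [key]
  rw [Finset.prod_mul_distrib]
  congr 1
  · rw [Finset.prod_eq_single_of_mem i (Finset.mem_univ i)]
    · simp [Fone]
    · intro t _ ht; simp [Fone, ht]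
  · rw [Finset.prod_eq_single_of_mem k (Finset.mem_univ k)]
    · simp [Fone]
    · intro t _ ht; simp [Fone, ht]

lemma integrable_pi_two (hik : i ≠ k) (f : E i → ℝ) (g : E k → ℝ)
    (hf : Integrable f (μ i)) (hg : Integrable g (μ k)) :
    Integrable (fun x : ∀ t, E t => f (x i) * g (x k)) (Measure.pi μ) := by
  have h : (fun x : ∀ t, E t => f (x i) * g (x k)) = fun x => ∏ t, Ftwo i k f g t (x t) :=
    funext fun x => (Ftwo_prod i k hik f g x).symm
  rw [h]
  exact my_integrable_pi μ _ (Ftwo_integrable μ i k hik f g hf hg)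

variable (l : ι)

/-- three-coordinate factor family -/
def Fthree (f : E i → ℝ) (g : E k → ℝ) (h : E l → ℝ) : ∀ t, E t → ℝ := fun t u =>
  Fone i f t u * (Fone k g t u * Fone l h t u)

lemma Fthree_prod (f : E i → ℝ) (g : E k → ℝ) (h : E l → ℝ) (x : ∀ t, E t) :
    ∏ t, Fthree i k l f g h t (x t) = f (x i) * (g (x k) * h (x l)) := by
  unfold Fthree
  rw [Finset.prod_mul_distrib, Finset.prod_mul_distrib, Fone_prod, Fone_prod, Fone_prod]

lemma Fthree_integrable (hik : i ≠ k) (hil : i ≠ l) (hkl : k ≠ l)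
    (f : E i → ℝ) (g : E k → ℝ) (h : E l → ℝ)
    (hf : Integrable f (μ i)) (hg : Integrable g (μ k)) (hh : Integrable h (μ l)) (t : ι) :
    Integrable (Fthree i k l f g h t) (μ t) := by
  unfold Fthree Fone
  by_cases h1 : t = i
  · subst h1
    simp only [dif_pos rfl, dif_neg hik, dif_neg hil, mul_one]
    simpa using hf
  · by_cases h2 : t = k
    · subst h2
      simp only [dif_neg h1, dif_pos rfl, dif_neg hkl, one_mul, mul_one]
      simpa using hg
    · by_cases h3 : t = l
      · subst h3
        simp only [dif_neg h1, dif_neg h2, dif_pos rfl, one_mul]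
        simpa using hh
      · simp only [dif_neg h1, dif_neg h2, dif_neg h3, mul_one]
        exact integrable_const (1 : ℝ)

lemma integrable_pi_three (hik : i ≠ k) (hil : i ≠ l) (hkl : k ≠ l)
    (f : E i → ℝ) (g : E k → ℝ) (h : E l → ℝ)
    (hf : Integrable f (μ i)) (hg : Integrable g (μ k)) (hh : Integrable h (μ l)) :
    Integrable (fun x : ∀ t, E t => f (x i) * (g (x k) * h (x l))) (Measure.pi μ) := by
  have heq : (fun x : ∀ t, E t => f (x i) * (g (x k) * h (x l)))
      = fun x => ∏ t, Fthree i k l f g h t (x t) :=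
    funext fun x => (Fthree_prod i k l f g h x).symm
  rw [heq]
  exact my_integrable_pi μ _ (Fthree_integrable μ i k l hik hil hkl f g h hf hg hh)

end PiLemmas
section WX

set_option linter.unusedSectionVars false
set_option linter.unusedVariables false

variable {d : ℕ} (ws : Fin d → ℝ)

lemma IW1 (i : Fin d) :
    Integrable (fun w : Fin d → ℝ => w i) (Measure.pi fun t => gaussianReal (ws t) 1) := by
  simpa using integrable_pi_one (fun t => gaussianReal (ws t) 1) i (fun u : ℝ => u) (iid _)

lemma EW1 (i : Fin d) :
    ∫ w, w i ∂(Measure.pi fun t => gaussianReal (ws t) 1) = ws i := by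
  have h := integral_pi_one (fun t => gaussianReal (ws t) 1) i (fun u : ℝ => u) (iid _)
  simpa [m_1] using h

lemma IW2 (i k : Fin d) :
    Integrable (fun w : Fin d → ℝ => w i * w k) (Measure.pi fun t => gaussianReal (ws t) 1) := by
  by_cases h : i = k
  · subst h
    simpa using integrable_pi_one (fun t => gaussianReal (ws t) 1) i (fun u : ℝ => u * u) (iuu _)
  · simpa using integrable_pi_two (fun t => gaussianReal (ws t) 1) i k h
      (fun u : ℝ => u) (fun u : ℝ => u) (iid _) (iid _)

lemma EW2 (i k : Fin d) :
    ∫ w, w i * w k ∂(Measure.pi fun t => gaussianReal (ws t) 1)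
      = ws i * ws k + if i = k then 1 else 0 := by
  by_cases h : i = k
  · subst h
    have h2 := integral_pi_one (fun t => gaussianReal (ws t) 1) i (fun u : ℝ => u * u) (iuu _)
    simp only [muu] at h2
    rw [if_pos rfl]
    rw [show (∫ w, w i * w i ∂(Measure.pi fun t => gaussianReal (ws t) 1))
      = ws i ^ 2 + 1 from h2]
    ring
  · have h2 := integral_pi_two (fun t => gaussianReal (ws t) 1) i k h
      (fun u : ℝ => u) (fun u : ℝ => u) (iid _) (iid _)
    simp only [m_1] at h2
    rw [show (∫ w, w i * w k ∂(Measure.pi fun t => gaussianReal (ws t) 1))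
      = ws i * ws k from h2, if_neg h]
    ring

lemma IW3 (i k l : Fin d) :
    Integrable (fun w : Fin d → ℝ => w i * (w k * w l))
      (Measure.pi fun t => gaussianReal (ws t) 1) := by
  by_cases hkl : k = l
  · subst hkl
    by_cases hik : i = k
    · subst hik
      simpa using integrable_pi_one (fun t => gaussianReal (ws t) 1) i
        (fun u : ℝ => u * (u * u)) (iuuu _)
    · simpa using integrable_pi_two (fun t => gaussianReal (ws t) 1) i k hik
        (fun u : ℝ => u) (fun u : ℝ => u * u) (iid _) (iuu _)
  · by_cases hik : i = k
    · subst hik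
      have := integrable_pi_two (fun t => gaussianReal (ws t) 1) i l hkl
        (fun u : ℝ => u * u) (fun u : ℝ => u) (iuu _) (iid _)
      exact this.congr (Filter.Eventually.of_forall fun w => by simp; ring)
    · by_cases hil : i = l
      · subst hil
        have := integrable_pi_two (fun t => gaussianReal (ws t) 1) i k hik
          (fun u : ℝ => u * u) (fun u : ℝ => u) (iuu _) (iid _)
        exact this.congr (Filter.Eventually.of_forall fun w => by simp; ring)
      · simpa using integrable_pi_three (fun t => gaussianReal (ws t) 1) i k l hik hil hkl
          (fun u : ℝ => u) (fun u : ℝ => u) (fun u : ℝ => u) (iid _) (iid _) (iid _)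

lemma EW3 (i k : Fin d) :
    ∫ w, w i * (w k * w k) ∂(Measure.pi fun t => gaussianReal (ws t) 1)
      = ws i * (ws k ^ 2 + 1) + if i = k then 2 * ws i else 0 := by
  by_cases h : i = k
  · subst h
    have h2 := integral_pi_one (fun t => gaussianReal (ws t) 1) i
      (fun u : ℝ => u * (u * u)) (iuuu _)
    simp only [muuu] at h2
    rw [show (∫ w, w i * (w i * w i) ∂(Measure.pi fun t => gaussianReal (ws t) 1))
      = ws i ^ 3 + 3 * ws i from h2, if_pos rfl]
    ring
  · have h2 := integral_pi_two (fun t => gaussianReal (ws t) 1) i k h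
      (fun u : ℝ => u) (fun u : ℝ => u * u) (iid _) (iuu _)
    simp only [m_1, muu] at h2
    rw [show (∫ w, w i * (w k * w k) ∂(Measure.pi fun t => gaussianReal (ws t) 1))
      = ws i * (ws k ^ 2 + 1) from h2, if_neg h]
    ring

lemma IN (k l : Fin d) :
    Integrable (fun u : Fin d → ℝ => u k * u l) (Measure.pi fun _ : Fin d => gaussianReal 0 1) := by
  simpa using IW2 (fun _ : Fin d => (0 : ℝ)) k l

lemma EN (k l : Fin d) :
    ∫ u : Fin d → ℝ, u k * u l ∂(Measure.pi fun _ : Fin d => gaussianReal 0 1)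
      = if k = l then 1 else 0 := by
  have h := EW2 (fun _ : Fin d => (0 : ℝ)) k l
  simpa using h

variable (C : ℕ)

lemma IX (j : Fin C) (k l : Fin d) :
    Integrable (fun xs : Fin C → Fin d → ℝ => xs j k * xs j l)
      (Measure.pi fun _ : Fin C => Measure.pi fun _ : Fin d => gaussianReal 0 1) := by
  simpa using integrable_pi_one (E := fun _ : Fin C => Fin d → ℝ)
    (fun _ => Measure.pi fun _ : Fin d => gaussianReal 0 1) j
    (fun u : Fin d → ℝ => u k * u l) (IN k l)

lemma EX (j : Fin C) (k l : Fin d) :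
    ∫ xs, xs j k * xs j l ∂(Measure.pi fun _ : Fin C => Measure.pi fun _ : Fin d => gaussianReal 0 1)
      = if k = l then 1 else 0 := by
  have h := integral_pi_one (E := fun _ : Fin C => Fin d → ℝ)
    (fun _ => Measure.pi fun _ : Fin d => gaussianReal 0 1) j
    (fun u : Fin d → ℝ => u k * u l) (IN k l)
  simpa [EN] using h

end WX
section Comp

set_option linter.unusedSectionVars false
set_option linter.unusedVariables false

noncomputable def muP (d C : ℕ) (ws : Fin d → ℝ) :
    Measure ((Fin d → ℝ) × (Fin C → Fin d → ℝ)) :=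
  (Measure.pi fun t => gaussianReal (ws t) 1).prod
    (Measure.pi fun _ : Fin C => Measure.pi fun _ : Fin d => gaussianReal 0 1)

variable (d C : ℕ) (ws : Fin d → ℝ)

lemma comp1 (hC : 1 ≤ C) (i k l : Fin d) :
    ∫ p, p.1 i * Gmat d C p.1 p.2 (Sum.inl k) (Sum.inl l) ∂(muP d C ws)
      = ws i * (if k = l then 1 else 0) := by
  have hCne : (C : ℝ) ≠ 0 := Nat.cast_ne_zero.2 (by omega)
  have h1 : (fun p : (Fin d → ℝ) × (Fin C → Fin d → ℝ) =>
      p.1 i * Gmat d C p.1 p.2 (Sum.inl k) (Sum.inl l))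
      = fun p => (C : ℝ)⁻¹ * ∑ j, p.1 i * (p.2 j k * p.2 j l) := by
    funext p
    simp only [Gmat, Matrix.smul_apply, Matrix.sum_apply, Matrix.vecMulVec_apply,
      Sum.elim_inl, smul_eq_mul]
    rw [mul_left_comm, Finset.mul_sum]
  rw [muP]
  rw [h1, integral_const_mul,
    integral_finset_sum _ fun j _ => (IW1 ws i).mul_prod (IX C j k l)]
  have h2 : ∀ j : Fin C, ∫ p : (Fin d → ℝ) × (Fin C → Fin d → ℝ),
      p.1 i * (p.2 j k * p.2 j l)
      ∂((Measure.pi fun t => gaussianReal (ws t) 1).prod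
        (Measure.pi fun _ : Fin C => Measure.pi fun _ : Fin d => gaussianReal 0 1))
      = ws i * (if k = l then 1 else 0) := by
    intro j
    exact (integral_prod_mul (fun w : Fin d → ℝ => w i)
      (fun xs : Fin C → Fin d → ℝ => xs j k * xs j l)).trans
      (by rw [EW1 ws i, EX C j k l])
  simp only [h2, Finset.sum_const, Finset.card_univ, Fintype.card_fin, nsmul_eq_mul]
  rw [← mul_assoc, inv_mul_cancel₀ hCne, one_mul]

lemma comp2 (hC : 1 ≤ C) (i k : Fin d) (u : Unit) :
    ∫ p, p.1 i * Gmat d C p.1 p.2 (Sum.inl k) (Sum.inr u) ∂(muP d C ws)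
      = ws i * ws k + if i = k then 1 else 0 := by
  have hCne : (C : ℝ) ≠ 0 := Nat.cast_ne_zero.2 (by omega)
  have h1 : (fun p : (Fin d → ℝ) × (Fin C → Fin d → ℝ) =>
      p.1 i * Gmat d C p.1 p.2 (Sum.inl k) (Sum.inr u))
      = fun p => (C : ℝ)⁻¹ * ∑ j, ∑ l, (p.1 i * p.1 l) * (p.2 j k * p.2 j l) := by
    funext p
    simp only [Gmat, Matrix.smul_apply, Matrix.sum_apply, Matrix.vecMulVec_apply,
      Sum.elim_inl, Sum.elim_inr, smul_eq_mul]
    rw [mul_left_comm, Finset.mul_sum]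
    refine congrArg _ (Finset.sum_congr rfl fun j _ => ?_)
    simp only [dotProduct, Finset.mul_sum]
    exact Finset.sum_congr rfl fun l _ => by ring
  rw [muP]
  rw [h1, integral_const_mul,
    integral_finset_sum _ fun j _ =>
      integrable_finset_sum _ fun l _ => (IW2 ws i l).mul_prod (IX C j k l)]
  have h2 : ∀ j : Fin C, ∫ p : (Fin d → ℝ) × (Fin C → Fin d → ℝ),
      ∑ l, (p.1 i * p.1 l) * (p.2 j k * p.2 j l)
      ∂((Measure.pi fun t => gaussianReal (ws t) 1).prod
        (Measure.pi fun _ : Fin C => Measure.pi fun _ : Fin d => gaussianReal 0 1))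
      = ws i * ws k + if i = k then 1 else 0 := by
    intro j
    rw [integral_finset_sum _ fun l _ => (IW2 ws i l).mul_prod (IX C j k l)]
    have h3 : ∀ l : Fin d, ∫ p : (Fin d → ℝ) × (Fin C → Fin d → ℝ),
        (p.1 i * p.1 l) * (p.2 j k * p.2 j l)
        ∂((Measure.pi fun t => gaussianReal (ws t) 1).prod
          (Measure.pi fun _ : Fin C => Measure.pi fun _ : Fin d => gaussianReal 0 1))
        = (ws i * ws l + if i = l then 1 else 0) * (if k = l then 1 else 0) := fun l =>
      (integral_prod_mul (fun w : Fin d → ℝ => w i * w l)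
        (fun xs : Fin C → Fin d → ℝ => xs j k * xs j l)).trans
        (by rw [EW2 ws i l, EX C j k l])
    simp only [h3, mul_ite, mul_one, mul_zero, Finset.sum_ite_eq, Finset.mem_univ, if_true]
  simp only [h2, Finset.sum_const, Finset.card_univ, Fintype.card_fin, nsmul_eq_mul]
  rw [← mul_assoc, inv_mul_cancel₀ hCne, one_mul]

lemma comp3 (hC : 1 ≤ C) (i l : Fin d) (u : Unit) :
    ∫ p, p.1 i * Gmat d C p.1 p.2 (Sum.inr u) (Sum.inl l) ∂(muP d C ws)
      = ws i * ws l + if i = l then 1 else 0 := by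
  have hCne : (C : ℝ) ≠ 0 := Nat.cast_ne_zero.2 (by omega)
  have h1 : (fun p : (Fin d → ℝ) × (Fin C → Fin d → ℝ) =>
      p.1 i * Gmat d C p.1 p.2 (Sum.inr u) (Sum.inl l))
      = fun p => (C : ℝ)⁻¹ * ∑ j, ∑ k, (p.1 i * p.1 k) * (p.2 j k * p.2 j l) := by
    funext p
    simp only [Gmat, Matrix.smul_apply, Matrix.sum_apply, Matrix.vecMulVec_apply,
      Sum.elim_inl, Sum.elim_inr, smul_eq_mul]
    rw [mul_left_comm, Finset.mul_sum]
    refine congrArg _ (Finset.sum_congr rfl fun j _ => ?_)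
    simp only [dotProduct, Finset.sum_mul, Finset.mul_sum]
    exact Finset.sum_congr rfl fun k _ => by ring
  rw [muP]
  rw [h1, integral_const_mul,
    integral_finset_sum _ fun j _ =>
      integrable_finset_sum _ fun k _ => (IW2 ws i k).mul_prod (IX C j k l)]
  have h2 : ∀ j : Fin C, ∫ p : (Fin d → ℝ) × (Fin C → Fin d → ℝ),
      ∑ k, (p.1 i * p.1 k) * (p.2 j k * p.2 j l)
      ∂((Measure.pi fun t => gaussianReal (ws t) 1).prod
        (Measure.pi fun _ : Fin C => Measure.pi fun _ : Fin d => gaussianReal 0 1))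
      = ws i * ws l + if i = l then 1 else 0 := by
    intro j
    rw [integral_finset_sum _ fun k _ => (IW2 ws i k).mul_prod (IX C j k l)]
    have h3 : ∀ k : Fin d, ∫ p : (Fin d → ℝ) × (Fin C → Fin d → ℝ),
        (p.1 i * p.1 k) * (p.2 j k * p.2 j l)
        ∂((Measure.pi fun t => gaussianReal (ws t) 1).prod
          (Measure.pi fun _ : Fin C => Measure.pi fun _ : Fin d => gaussianReal 0 1))
        = (ws i * ws k + if i = k then 1 else 0) * (if k = l then 1 else 0) := fun k =>
      (integral_prod_mul (fun w : Fin d → ℝ => w i * w k)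
        (fun xs : Fin C → Fin d → ℝ => xs j k * xs j l)).trans
        (by rw [EW2 ws i k, EX C j k l])
    simp only [h3, mul_ite, mul_one, mul_zero, Finset.sum_ite_eq', Finset.mem_univ, if_true]
  simp only [h2, Finset.sum_const, Finset.card_univ, Fintype.card_fin, nsmul_eq_mul]
  rw [← mul_assoc, inv_mul_cancel₀ hCne, one_mul]

lemma comp4 (hC : 1 ≤ C) (i : Fin d) (u u' : Unit) :
    ∫ p, p.1 i * Gmat d C p.1 p.2 (Sum.inr u) (Sum.inr u') ∂(muP d C ws)
      = ws i * ((∑ t, ws t ^ 2) + d + 2) := by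
  have hCne : (C : ℝ) ≠ 0 := Nat.cast_ne_zero.2 (by omega)
  have h1 : (fun p : (Fin d → ℝ) × (Fin C → Fin d → ℝ) =>
      p.1 i * Gmat d C p.1 p.2 (Sum.inr u) (Sum.inr u'))
      = fun p => (C : ℝ)⁻¹ * ∑ j, ∑ k, ∑ l,
          (p.1 i * (p.1 k * p.1 l)) * (p.2 j k * p.2 j l) := by
    funext p
    simp only [Gmat, Matrix.smul_apply, Matrix.sum_apply, Matrix.vecMulVec_apply,
      Sum.elim_inr, smul_eq_mul]
    rw [mul_left_comm, Finset.mul_sum]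
    refine congrArg _ (Finset.sum_congr rfl fun j _ => ?_)
    simp only [dotProduct, Finset.sum_mul, Finset.mul_sum]
    refine Finset.sum_congr rfl fun k _ => ?_
    exact Finset.sum_congr rfl fun l _ => by ring
  rw [muP]
  rw [h1, integral_const_mul,
    integral_finset_sum _ fun j _ =>
      integrable_finset_sum _ fun k _ =>
        integrable_finset_sum _ fun l _ => (IW3 ws i k l).mul_prod (IX C j k l)]
  have h2 : ∀ j : Fin C, ∫ p : (Fin d → ℝ) × (Fin C → Fin d → ℝ),
      ∑ k, ∑ l, (p.1 i * (p.1 k * p.1 l)) * (p.2 j k * p.2 j l)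
      ∂((Measure.pi fun t => gaussianReal (ws t) 1).prod
        (Measure.pi fun _ : Fin C => Measure.pi fun _ : Fin d => gaussianReal 0 1))
      = ws i * ((∑ t, ws t ^ 2) + d + 2) := by
    intro j
    rw [integral_finset_sum _ fun k _ =>
      integrable_finset_sum _ fun l _ => (IW3 ws i k l).mul_prod (IX C j k l)]
    have h3 : ∀ k : Fin d,
        ∫ p : (Fin d → ℝ) × (Fin C → Fin d → ℝ),
          ∑ l, (p.1 i * (p.1 k * p.1 l)) * (p.2 j k * p.2 j l)
        ∂((Measure.pi fun t => gaussianReal (ws t) 1).prod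
          (Measure.pi fun _ : Fin C => Measure.pi fun _ : Fin d => gaussianReal 0 1))
        = ws i * (ws k ^ 2 + 1) + if i = k then 2 * ws i else 0 := by
      intro k
      rw [integral_finset_sum _ fun l _ => (IW3 ws i k l).mul_prod (IX C j k l)]
      have h4 : ∀ l : Fin d, ∫ p : (Fin d → ℝ) × (Fin C → Fin d → ℝ),
          (p.1 i * (p.1 k * p.1 l)) * (p.2 j k * p.2 j l)
          ∂((Measure.pi fun t => gaussianReal (ws t) 1).prod
            (Measure.pi fun _ : Fin C => Measure.pi fun _ : Fin d => gaussianReal 0 1))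
          = (∫ w, w i * (w k * w l) ∂(Measure.pi fun t => gaussianReal (ws t) 1))
              * (if k = l then 1 else 0) := fun l =>
        (integral_prod_mul (fun w : Fin d → ℝ => w i * (w k * w l))
          (fun xs : Fin C → Fin d → ℝ => xs j k * xs j l)).trans
          (by rw [EX C j k l])
      simp only [h4, mul_ite, mul_one, mul_zero, Finset.sum_ite_eq, Finset.mem_univ, if_true]
      exact EW3 ws i k
    simp only [h3]
    rw [Finset.sum_add_distrib, Finset.sum_ite_eq, if_pos (Finset.mem_univ i)]
    rw [← Finset.mul_sum, Finset.sum_add_distrib, Finset.sum_const, Finset.card_univ,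
      Fintype.card_fin, nsmul_eq_mul, mul_one]
    ring
  simp only [h2, Finset.sum_const, Finset.card_univ, Fintype.card_fin, nsmul_eq_mul]
  rw [← mul_assoc, inv_mul_cancel₀ hCne, one_mul]

end Comp

/-- In the linear regression data model, for every `i ∈ {1,…,d}`,
`E[ŵ[i]·G] = [[w⋆[i] I_d, w⋆[i] w⋆ + e_i],[(w⋆[i] w⋆ + e_i)ᵀ, w⋆[i](‖w⋆‖² + d + 2)]]`
(entrywise). -/
theorem stmt_7 (d C : ℕ) (hC : 1 ≤ C) (wstar : EuclideanSpace ℝ (Fin d))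
    {Ω : Type*} [MeasureSpace Ω] [IsProbabilityMeasure (ℙ : Measure Ω)]
    (w : Ω → Fin d → ℝ) (x : Ω → Fin C → Fin d → ℝ)
    (hw : Measurable w) (hx : Measurable x)
    (hlaw : Measure.map (fun ω => (w ω, x ω)) ℙ =
      (Measure.pi fun i : Fin d => gaussianReal (wstar i) 1).prod
        (Measure.pi fun _ : Fin C => Measure.pi fun _ : Fin d => gaussianReal 0 1)) :
    ∀ (i : Fin d) (m n : Fin d ⊕ Unit),
      ∫ ω, w ω i * Gmat d C (w ω) (x ω) m n = blockN d wstar i m n := by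
  intro i m n
  have hz : ∀ (j : Fin C) (q : Fin d ⊕ Unit),
      Measurable fun p : (Fin d → ℝ) × (Fin C → Fin d → ℝ) =>
        Sum.elim (p.2 j) (fun _ : Unit => p.1 ⬝ᵥ p.2 j) q := by
    intro j q
    rcases q with s | u
    · simp only [Sum.elim_inl]
      exact (measurable_pi_apply s).comp ((measurable_pi_apply j).comp measurable_snd)
    · simp only [Sum.elim_inr, dotProduct]
      exact Finset.measurable_sum _ fun s _ =>
        ((measurable_pi_apply s).comp measurable_fst).mul
          ((measurable_pi_apply s).comp ((measurable_pi_apply j).comp measurable_snd))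
  have hGmeas : ∀ q r : Fin d ⊕ Unit,
      Measurable fun p : (Fin d → ℝ) × (Fin C → Fin d → ℝ) =>
        p.1 i * Gmat d C p.1 p.2 q r := by
    intro q r
    have hG : Measurable fun p : (Fin d → ℝ) × (Fin C → Fin d → ℝ) =>
        Gmat d C p.1 p.2 q r := by
      simp only [Gmat, Matrix.smul_apply, Matrix.sum_apply, Matrix.vecMulVec_apply, smul_eq_mul]
      exact measurable_const.mul (Finset.measurable_sum _ fun j _ => (hz j q).mul (hz j r))
    exact ((measurable_pi_apply i).comp measurable_fst).mul hG
  have key : ∀ F : (Fin d → ℝ) × (Fin C → Fin d → ℝ) → ℝ, Measurable F →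
      ∫ ω, F (w ω, x ω) = ∫ p, F p ∂(muP d C (fun t => wstar t)) := by
    intro F hF
    have h0 := integral_map (μ := (ℙ : Measure Ω)) (φ := fun ω => (w ω, x ω))
      (hw.prodMk hx).aemeasurable (f := F) hF.aestronglyMeasurable
    rw [hlaw] at h0
    exact h0.symm
  rcases m with k | u <;> rcases n with l | u'
  · refine (key _ (hGmeas _ _)).trans ((comp1 d C (fun t => wstar t) hC i k l).trans ?_)
    simp only [blockN, Matrix.fromBlocks_apply₁₁, Matrix.smul_apply, Matrix.one_apply,
      smul_eq_mul]
  · refine (key _ (hGmeas _ _)).trans ((comp2 d C (fun t => wstar t) hC i k u').trans ?_)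
    simp only [blockN, Matrix.fromBlocks_apply₁₂, Matrix.of_apply, Pi.single_apply]
    congr 1
    by_cases h : i = k
    · subst h; simp
    · simp [h, Ne.symm h]
  · refine (key _ (hGmeas _ _)).trans ((comp3 d C (fun t => wstar t) hC i l u).trans ?_)
    simp only [blockN, Matrix.fromBlocks_apply₂₁, Matrix.of_apply, Pi.single_apply]
    congr 1
    by_cases h : i = l
    · subst h; simp
    · simp [h, Ne.symm h]
  · refine (key _ (hGmeas _ _)).trans ((comp4 d C (fun t => wstar t) hC i u u').trans ?_)
    have hnorm : ‖wstar‖ ^ 2 = ∑ t, wstar t ^ 2 := by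
      rw [EuclideanSpace.norm_eq, Real.sq_sqrt (by positivity)]
      simp [Real.norm_eq_abs, sq_abs]
    simp only [blockN, Matrix.fromBlocks_apply₂₂, Matrix.of_apply, hnorm]
end

section
/- Let d, C ∈ ℕ with C ≥ 1, X ∈ ℝ^{C×d}, y ∈ ℝ^C, x_q ∈ ℝ^d, w⋆ ∈ ℝ^d, η ∈ ℝ, and set y_q = w⋆^T x_q. With the GD-transformer weights W^V = [[0,0],[w⋆^T,−1]], W^K = W^Q = [[I_d,0],[0,0]], W^P = −(η/C) I_{d+1}, mask W^M = [[I_C,0],[0,0]], and embedding E = [[X^T, x_q],[y^T, y_q]], the bottom-right entry of E + W^P W^V E W^M (E^T (W^K)^T W^Q E) equals (w⋆ − (η/C)·X^T (X w⋆ − y))^T x_q. That is, linear self-attention with these weights and initial guess y_q = w⋆^T x_q outputs exactly the prediction of one gradient-descent step on the least-squares loss initialized at w⋆ with step size η. -/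
open Matrix

/-- The `(d+1)×(C+1)` embedding matrix `E = [[Xᵀ, x_q],[yᵀ, y_q]]`. -/
def embed (d C : ℕ) (X : Matrix (Fin C) (Fin d) ℝ) (y : Fin C → ℝ)
    (xq : Fin d → ℝ) (yq : ℝ) : Matrix (Fin d ⊕ Unit) (Fin C ⊕ Unit) ℝ :=
  Matrix.fromBlocks Xᵀ (Matrix.of fun i (_ : Unit) => xq i)
    (Matrix.of fun (_ : Unit) j => y j) (Matrix.of fun (_ : Unit) (_ : Unit) => yq)

/-- The value matrix `W^V = [[0, 0],[w⋆ᵀ, −1]]`. -/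
def WV (d : ℕ) (wstar : Fin d → ℝ) : Matrix (Fin d ⊕ Unit) (Fin d ⊕ Unit) ℝ :=
  Matrix.fromBlocks 0 0 (Matrix.of fun (_ : Unit) j => wstar j)
    (Matrix.of fun (_ : Unit) (_ : Unit) => (-1 : ℝ))

/-- The key/query matrix `W^K = W^Q = [[I_d, 0],[0, 0]]`. -/
def WKQ (d : ℕ) : Matrix (Fin d ⊕ Unit) (Fin d ⊕ Unit) ℝ :=
  Matrix.fromBlocks (1 : Matrix (Fin d) (Fin d) ℝ) 0 0 0

/-- The mask matrix `W^M = [[I_C, 0],[0, 0]]`. -/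
def maskM (C : ℕ) : Matrix (Fin C ⊕ Unit) (Fin C ⊕ Unit) ℝ :=
  Matrix.fromBlocks (1 : Matrix (Fin C) (Fin C) ℝ) 0 0 0


private lemma swap2 {α β M : Type*} [Fintype α] [Fintype β] [AddCommMonoid M]
    (f : α → β → M) : ∑ a : α, ∑ b : β, f a b = ∑ b : β, ∑ a : α, f a b :=
  Finset.sum_comm

/-- With the GD-transformer weights and initial guess `y_q = w⋆ᵀ x_q`,
the bottom-right entry of `E + W^P W^V E W^M (Eᵀ (W^K)ᵀ W^Q E)` equals
`(w⋆ − (η/C)·Xᵀ(X w⋆ − y))ᵀ x_q`, i.e. linear self-attention outputs the prediction of one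
gradient-descent step on the least-squares loss initialized at `w⋆` with step size `η`. -/
theorem stmt_13 (d C : ℕ) (hC : 1 ≤ C) (X : Matrix (Fin C) (Fin d) ℝ)
    (y : Fin C → ℝ) (xq : Fin d → ℝ) (wstar : Fin d → ℝ) (η : ℝ) :
    (embed d C X y xq (wstar ⬝ᵥ xq) +
        ((-(η / (C : ℝ))) • (1 : Matrix (Fin d ⊕ Unit) (Fin d ⊕ Unit) ℝ)) * WV d wstar *
          embed d C X y xq (wstar ⬝ᵥ xq) * maskM C *
          ((embed d C X y xq (wstar ⬝ᵥ xq))ᵀ * (WKQ d)ᵀ * WKQ d *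
            embed d C X y xq (wstar ⬝ᵥ xq)))
        (Sum.inr ()) (Sum.inr ()) =
      (wstar - (η / (C : ℝ)) • Xᵀ.mulVec (X.mulVec wstar - y)) ⬝ᵥ xq := by
  simp only [embed, WV, WKQ, maskM, Matrix.add_apply, Matrix.smul_mul,
    Matrix.mul_apply, Matrix.smul_apply, Matrix.transpose_apply,
    Fintype.sum_sum_type, Finset.univ_unique, Finset.sum_singleton,
    Matrix.fromBlocks_apply₁₁, Matrix.fromBlocks_apply₁₂,
    Matrix.fromBlocks_apply₂₁, Matrix.fromBlocks_apply₂₂,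
    Matrix.of_apply, Matrix.zero_apply, Matrix.one_apply, smul_eq_mul]
  simp only [reduceCtorEq, if_false, if_true, mul_zero, zero_mul, mul_one, one_mul,
    add_zero, zero_add, Finset.sum_const_zero, Finset.sum_ite_eq, Finset.sum_ite_eq',
    Finset.mem_univ, if_true, mul_neg, neg_mul, dotProduct, Matrix.sub_apply,
    Matrix.mulVec, Pi.sub_apply, Pi.smul_apply, smul_eq_mul, Matrix.transpose_apply]
  simp only [mul_ite, ite_mul, mul_one, mul_zero, zero_mul, one_mul,
    Finset.sum_ite_eq, Finset.sum_ite_eq', Finset.mem_univ, if_true]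
  simp only [sub_mul, mul_sub, Finset.sum_sub_distrib, Finset.mul_sum, Finset.sum_mul,
    neg_mul, mul_neg, ← sub_eq_add_neg, mul_assoc, mul_comm, mul_left_comm]
  congr 1
  congr 1
  · conv_rhs => rw [swap2 fun (j : Fin d) (c : Fin C) =>
      ∑ k : Fin d, X c j * (X c k * (xq j * (wstar k * (η / ↑C))))]
    refine Finset.sum_congr rfl fun c _ => ?_
    conv_rhs => rw [swap2 fun (j k : Fin d) => X c j * (X c k * (xq j * (wstar k * (η / ↑C))))]
    exact Finset.sum_congr rfl fun a _ => Finset.sum_congr rfl fun b _ => by ring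
  · exact swap2 _
end

section
/- Let d, C ∈ ℕ with C ≥ 1, w ∈ ℝ^d, and c ∈ ℝ with c ≠ ‖w‖². Define W₁ = [[I_d, w],[w^T, c]] and W₃ = [[I_d, 0],[w^T, 0]] in ℝ^{(d+1)×(d+1)}. Let X ∈ ℝ^{C×d}, x_q ∈ ℝ^d, set y = X w, and let E = [[X^T, x_q],[y^T, 0]] and E_w = [[X^T, x_q],[y^T, w^T x_q]] in ℝ^{(d+1)×(C+1)}. Then: (i) W₁ is invertible; (ii) W₃ E = E_w; (iii) for any matrices W^P, W^V, W^K, W^Q ∈ ℝ^{(d+1)×(d+1)} and mask W^M = [[I_C,0],[0,0]], the bottom-right entry of W₁·(E + (1/C)·W₁^{−1} W^P W^V W₃ E W^M · E^T W₃^T (W^K)^T W^Q W₃ E) equals the bottom-right entry of E_w + (1/C)·W^P W^V E_w W^M (E_w^T (W^K)^T W^Q E_w). Hence every y_q-LSA function is realized by a linear transformer block. -/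
open Matrix

/-- The block matrix `W₁ = [[I_d, w],[wᵀ, c]]`. -/
noncomputable def W1 (d : ℕ) (w : EuclideanSpace ℝ (Fin d)) (c : ℝ) :
    Matrix (Fin d ⊕ Unit) (Fin d ⊕ Unit) ℝ :=
  Matrix.fromBlocks (1 : Matrix (Fin d) (Fin d) ℝ)
    (Matrix.of fun i (_ : Unit) => w i)
    (Matrix.of fun (_ : Unit) j => w j)
    (Matrix.of fun (_ : Unit) (_ : Unit) => c)

/-- The block matrix `W₃ = [[I_d, 0],[wᵀ, 0]]`. -/
noncomputable def W3 (d : ℕ) (w : EuclideanSpace ℝ (Fin d)) :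
    Matrix (Fin d ⊕ Unit) (Fin d ⊕ Unit) ℝ :=
  Matrix.fromBlocks (1 : Matrix (Fin d) (Fin d) ℝ) 0
    (Matrix.of fun (_ : Unit) j => w j) 0

/-- Let `c ≠ ‖w‖²`, `y = X w`, `E = [[Xᵀ, x_q],[yᵀ, 0]]` and
`E_w = [[Xᵀ, x_q],[yᵀ, wᵀx_q]]`. Then (i) `W₁` is invertible; (ii) `W₃ E = E_w`;
(iii) for all `W^P, W^V, W^K, W^Q` the bottom-right entry of
`W₁·(E + (1/C)·W₁⁻¹ W^P W^V W₃ E W^M Eᵀ W₃ᵀ (W^K)ᵀ W^Q W₃ E)` equals the bottom-right entry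
of `E_w + (1/C)·W^P W^V E_w W^M (E_wᵀ (W^K)ᵀ W^Q E_w)`: every `y_q`-LSA function is realized
by a linear transformer block. -/
theorem stmt_14 (d C : ℕ) (hC : 1 ≤ C) (w : EuclideanSpace ℝ (Fin d)) (c : ℝ)
    (hc : c ≠ ‖w‖ ^ 2) (X : Matrix (Fin C) (Fin d) ℝ) (xq : Fin d → ℝ) :
    IsUnit (W1 d w c) ∧
    W3 d w * embed d C X (X.mulVec fun i => w i) xq 0 =
      embed d C X (X.mulVec fun i => w i) xq ((fun i => w i) ⬝ᵥ xq) ∧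
    ∀ WP WV WK WQ : Matrix (Fin d ⊕ Unit) (Fin d ⊕ Unit) ℝ,
      (W1 d w c *
          (embed d C X (X.mulVec fun i => w i) xq 0 +
            (C : ℝ)⁻¹ •
              ((W1 d w c)⁻¹ * WP * WV * W3 d w *
                embed d C X (X.mulVec fun i => w i) xq 0 * maskM C *
                (embed d C X (X.mulVec fun i => w i) xq 0)ᵀ * (W3 d w)ᵀ * WKᵀ * WQ *
                W3 d w * embed d C X (X.mulVec fun i => w i) xq 0)))
          (Sum.inr ()) (Sum.inr ()) =
        (embed d C X (X.mulVec fun i => w i) xq ((fun i => w i) ⬝ᵥ xq) +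
            (C : ℝ)⁻¹ •
              (WP * WV * embed d C X (X.mulVec fun i => w i) xq ((fun i => w i) ⬝ᵥ xq) *
                maskM C *
                ((embed d C X (X.mulVec fun i => w i) xq ((fun i => w i) ⬝ᵥ xq))ᵀ * WKᵀ *
                  WQ * embed d C X (X.mulVec fun i => w i) xq ((fun i => w i) ⬝ᵥ xq))))
          (Sum.inr ()) (Sum.inr ()) := by
  set E := embed d C X (X.mulVec fun i => w i) xq 0 with hE
  set Ew := embed d C X (X.mulVec fun i => w i) xq ((fun i => w i) ⬝ᵥ xq) with hEw
  have hnorm : ‖w‖ ^ 2 = ∑ i, w i ^ 2 := by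
    rw [EuclideanSpace.norm_eq, Real.sq_sqrt (by positivity)]
    simp [sq_abs]
  have hdet : (W1 d w c).det ≠ 0 := by
    rw [W1, Matrix.det_fromBlocks_one₁₁, Matrix.det_unique]
    simp only [Matrix.sub_apply, Matrix.mul_apply, Matrix.of_apply]
    intro h
    apply hc
    rw [hnorm]
    have : c - ∑ i, w i * w i = 0 := h
    have := sub_eq_zero.mp this
    rw [this]
    exact Finset.sum_congr rfl fun i _ => (sq (w i)).symm ▸ (pow_two (w i)).symm
  have hUnit : IsUnit (W1 d w c) := (Matrix.isUnit_iff_isUnit_det _).mpr (isUnit_iff_ne_zero.mpr hdet)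
  have h2 : W3 d w * E = Ew := by
    ext i j
    rcases i with i | i <;> rcases j with j | j <;>
      simp [W3, hE, hEw, embed, Matrix.mul_apply, Fintype.sum_sum_type,
        Matrix.fromBlocks, Matrix.one_apply, Matrix.mulVec, dotProduct,
        Finset.sum_ite_eq', mul_comm]
  refine ⟨hUnit, h2, fun WP WV WK WQ => ?_⟩
  have hT : Eᵀ * (W3 d w)ᵀ = Ewᵀ := by rw [← Matrix.transpose_mul, h2]
  have hinv : W1 d w c * (W1 d w c)⁻¹ = 1 := Matrix.mul_nonsing_inv _ (isUnit_iff_ne_zero.mpr hdet)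
  have hbig : (W1 d w c)⁻¹ * WP * WV * W3 d w * E * maskM C * Eᵀ * (W3 d w)ᵀ * WKᵀ * WQ *
      W3 d w * E =
      (W1 d w c)⁻¹ * (WP * WV * Ew * maskM C * (Ewᵀ * WKᵀ * WQ * Ew)) := by
    calc (W1 d w c)⁻¹ * WP * WV * W3 d w * E * maskM C * Eᵀ * (W3 d w)ᵀ * WKᵀ * WQ *
        W3 d w * E
        = (W1 d w c)⁻¹ * WP * WV * (W3 d w * E) * maskM C * (Eᵀ * (W3 d w)ᵀ) * WKᵀ * WQ *
          (W3 d w * E) := by simp only [Matrix.mul_assoc]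
      _ = (W1 d w c)⁻¹ * (WP * WV * Ew * maskM C * (Ewᵀ * WKᵀ * WQ * Ew)) := by
          rw [h2, hT]; simp only [Matrix.mul_assoc]
  rw [hbig, Matrix.mul_add, Matrix.mul_smul, ← Matrix.mul_assoc, hinv, Matrix.one_mul]
  have hW1E : (W1 d w c * E) (Sum.inr ()) (Sum.inr ()) = Ew (Sum.inr ()) (Sum.inr ()) := by
    simp [W1, hE, hEw, embed, Matrix.mul_apply, Fintype.sum_sum_type, Matrix.fromBlocks,
      dotProduct]
  simp only [Matrix.add_apply, Matrix.smul_apply, hW1E]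
end

section
/- Let d, C ∈ ℕ with d, C ≥ 1, let w ∈ ℝ^d be a fixed vector, and let x_1, …, x_C be i.i.d. standard Gaussian random vectors in ℝ^d. Then for every j ∈ {1,…,d}: E[(Σ_{i=1}^C (w^T x_i)·x_i[j]) · (Σ_{k=1}^C x_k x_k^T)·w] = C(C+1)·w[j]·w + C·‖w‖²·e_j, where e_j is the j-th standard basis vector of ℝ^d and the expectation of the ℝ^d-valued random vector is taken coordinatewise. -/
open Matrix MeasureTheory ProbabilityTheory

open Real NNReal ENNReal

noncomputable section
namespace Stmt18Aux

lemma integrable_pow_exp (n : ℕ) :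
    Integrable (fun x : ℝ => x ^ n * Real.exp (-x ^ 2 / 2)) := by
  have h := integrable_rpow_mul_exp_neg_mul_sq (b := (1:ℝ)/2) (by norm_num)
    (s := (n : ℝ)) (lt_of_lt_of_le neg_one_lt_zero (Nat.cast_nonneg n))
  have e : ∀ x : ℝ, -((1:ℝ)/2) * x ^ 2 = -x ^ 2 / 2 := fun x => by ring
  simp_rw [e, Real.rpow_natCast] at h
  exact h

lemma J_zero : ∫ x : ℝ, Real.exp (-x ^ 2 / 2) = Real.sqrt (2 * π) := by
  have h := integral_gaussian ((1:ℝ)/2)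
  have e : ∀ x : ℝ, -((1:ℝ)/2) * x ^ 2 = -x ^ 2 / 2 := fun x => by ring
  simp_rw [e] at h
  rw [h]
  norm_num
  rw [mul_comm]

lemma hasDeriv_aux (k : ℕ) (x : ℝ) :
    HasDerivAt (fun y : ℝ => y ^ k * Real.exp (-y ^ 2 / 2))
      ((k : ℝ) * x ^ (k - 1) * Real.exp (-x ^ 2 / 2) - x ^ (k + 1) * Real.exp (-x ^ 2 / 2)) x := by
  have h1 : HasDerivAt (fun y : ℝ => -y ^ 2 / 2) (-x) x := by
    have : HasDerivAt (fun y : ℝ => -y ^ 2 / 2) (-((2:ℕ) * x ^ (2 - 1)) / 2) x :=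
      ((hasDerivAt_pow 2 x).neg.div_const 2)
    convert this using 1
    simp
    ring
  have h2 := h1.exp
  have h3 : HasDerivAt (fun y : ℝ => y ^ k * Real.exp (-y ^ 2 / 2))
      ((k : ℝ) * x ^ (k - 1) * Real.exp (-x ^ 2 / 2) + x ^ k * (Real.exp (-x ^ 2 / 2) * -x)) x :=
    (hasDerivAt_pow k x : HasDerivAt (fun y : ℝ => y ^ k) ((k : ℝ) * x ^ (k - 1)) x).mul h2
  convert h3 using 1
  ring

lemma J_one : ∫ x : ℝ, x ^ 1 * Real.exp (-x ^ 2 / 2) = 0 := by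
  have hf : ∀ x : ℝ, HasDerivAt (fun y : ℝ => Real.exp (-y ^ 2 / 2))
      (-(x ^ 1 * Real.exp (-x ^ 2 / 2))) x := by
    intro x
    have h1 : HasDerivAt (fun y : ℝ => -y ^ 2 / 2) (-x) x := by
      have : HasDerivAt (fun y : ℝ => -y ^ 2 / 2) (-((2:ℕ) * x ^ (2 - 1)) / 2) x :=
        ((hasDerivAt_pow 2 x).neg.div_const 2)
      convert this using 1
      simp
      ring
    have := h1.exp
    convert this using 1
    ring
  have h0 := integral_eq_zero_of_hasDerivAt_of_integrable hf
    ((integrable_pow_exp 1).neg) (by simpa using integrable_pow_exp 0)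
  rw [integral_neg, neg_eq_zero] at h0
  exact h0

lemma J_rec (k : ℕ) :
    ∫ x : ℝ, x ^ (k + 2) * Real.exp (-x ^ 2 / 2)
      = ((k : ℝ) + 1) * ∫ x : ℝ, x ^ k * Real.exp (-x ^ 2 / 2) := by
  have hf : ∀ x : ℝ, HasDerivAt (fun y : ℝ => y ^ (k + 1) * Real.exp (-y ^ 2 / 2))
      (((k : ℝ) + 1) * x ^ k * Real.exp (-x ^ 2 / 2) - x ^ (k + 2) * Real.exp (-x ^ 2 / 2)) x := by
    intro x
    have := hasDeriv_aux (k + 1) x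
    convert this using 2 <;> push_cast <;> ring
  have hint1 : Integrable (fun x : ℝ => ((k : ℝ) + 1) * (x ^ k * Real.exp (-x ^ 2 / 2))) :=
    (integrable_pow_exp k).const_mul _
  have hint : Integrable (fun x : ℝ =>
      ((k : ℝ) + 1) * x ^ k * Real.exp (-x ^ 2 / 2) - x ^ (k + 2) * Real.exp (-x ^ 2 / 2)) := by
    have := hint1.sub (integrable_pow_exp (k + 2))
    simpa [mul_assoc, Pi.sub_def] using this
  have h0 := integral_eq_zero_of_hasDerivAt_of_integrable hf hint (integrable_pow_exp (k + 1))
  rw [integral_sub (by simpa [mul_assoc] using hint1) (integrable_pow_exp (k + 2))] at h0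
  simp_rw [mul_assoc] at h0
  rw [integral_const_mul] at h0
  linarith


/-- the n-th moment of the standard gaussian -/
def gm (n : ℕ) : ℝ := ∫ t : ℝ, t ^ n ∂(gaussianReal 0 1)

lemma pdf_eq (x : ℝ) : gaussianPDFReal 0 1 x = (Real.sqrt (2 * π))⁻¹ * Real.exp (-x ^ 2 / 2) := by
  unfold gaussianPDFReal
  norm_num

lemma gm_eq (n : ℕ) :
    gm n = (Real.sqrt (2 * π))⁻¹ * ∫ x : ℝ, x ^ n * Real.exp (-x ^ 2 / 2) := by
  unfold gm
  rw [gaussianReal_of_var_ne_zero 0 one_ne_zero]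
  have hpdf : gaussianPDF 0 1 = fun x => ((Real.toNNReal (gaussianPDFReal 0 1 x) : ℝ≥0) : ℝ≥0∞) :=
    rfl
  rw [hpdf, integral_withDensity_eq_integral_smul (measurable_gaussianPDFReal 0 1).real_toNNReal]
  have : ∀ x : ℝ, (Real.toNNReal (gaussianPDFReal 0 1 x) : ℝ≥0) • (x ^ n)
      = (Real.sqrt (2 * π))⁻¹ * (x ^ n * Real.exp (-x ^ 2 / 2)) := by
    intro x
    rw [NNReal.smul_def, smul_eq_mul, Real.coe_toNNReal _ (gaussianPDFReal_nonneg 0 1 x), pdf_eq]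
    ring
  simp_rw [this]
  rw [integral_const_mul]

lemma sqrt_two_pi_pos : 0 < Real.sqrt (2 * π) := Real.sqrt_pos.mpr (by positivity)

lemma gm_zero : gm 0 = 1 := by
  rw [gm_eq]
  simp only [pow_zero, one_mul]
  rw [J_zero, inv_mul_cancel₀ sqrt_two_pi_pos.ne']

lemma gm_one : gm 1 = 0 := by rw [gm_eq, J_one, mul_zero]

lemma e_zero : ∫ x : ℝ, x ^ 0 * Real.exp (-x ^ 2 / 2) = Real.sqrt (2 * π) := by
  simpa using J_zero

lemma e_two : ∫ x : ℝ, x ^ 2 * Real.exp (-x ^ 2 / 2) = Real.sqrt (2 * π) := by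
  have h := J_rec 0
  norm_num at h
  rw [h]
  exact J_zero

lemma e_four : ∫ x : ℝ, x ^ 4 * Real.exp (-x ^ 2 / 2) = 3 * Real.sqrt (2 * π) := by
  have := J_rec 2
  norm_num at this
  rw [this, e_two]

lemma gm_two : gm 2 = 1 := by
  rw [gm_eq, e_two, inv_mul_cancel₀ sqrt_two_pi_pos.ne']

lemma gm_three : gm 3 = 0 := by
  rw [gm_eq]
  have := J_rec 1
  rw [show (1:ℕ)+2 = 3 from rfl] at this
  rw [this, J_one, mul_zero, mul_zero]

lemma gm_four : gm 4 = 3 := by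
  rw [gm_eq, e_four, mul_comm 3, ← mul_assoc, inv_mul_cancel₀ sqrt_two_pi_pos.ne', one_mul]

lemma integrable_pow_g (n : ℕ) : Integrable (fun t : ℝ => t ^ n) (gaussianReal 0 1) := by
  rw [gaussianReal_of_var_ne_zero 0 one_ne_zero]
  rw [integrable_withDensity_iff (measurable_gaussianPDF 0 1)
    (ae_of_all _ fun x => ENNReal.ofReal_lt_top)]
  have : ∀ x : ℝ, x ^ n * (gaussianPDF 0 1 x).toReal
      = (Real.sqrt (2 * π))⁻¹ * (x ^ n * Real.exp (-x ^ 2 / 2)) := by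
    intro x
    rw [gaussianPDF, ENNReal.toReal_ofReal (gaussianPDFReal_nonneg 0 1 x), pdf_eq]
    ring
  simp_rw [this]
  exact (integrable_pow_exp n).const_mul _


lemma pi_integral {ι α : Type*} [Fintype ι] [MeasurableSpace α] (m : Measure α) [SigmaFinite m]
    (f : ι → α → ℝ) :
    ∫ z : ι → α, ∏ i, f i (z i) ∂(Measure.pi fun _ : ι => m) = ∏ i, ∫ t, f i t ∂m := by
  letI : MeasureSpace α := ⟨m⟩
  letI : SigmaFinite (volume : Measure α) := ‹_›
  exact integral_fintype_prod_eq_prod f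

lemma pi_integrable {ι α : Type*} [Fintype ι] [MeasurableSpace α] (m : Measure α) [SigmaFinite m]
    (f : ι → α → ℝ) (hf : ∀ i, Integrable (f i) m) :
    Integrable (fun z : ι → α => ∏ i, f i (z i)) (Measure.pi fun _ : ι => m) := by
  letI : MeasureSpace α := ⟨m⟩
  letI : SigmaFinite (volume : Measure α) := ‹_›
  exact Integrable.fintype_prod hf

variable {d : ℕ}

def cnt2 (a b : Fin d) (i : Fin d) : ℕ := (if a = i then 1 else 0) + (if b = i then 1 else 0)

def cnt4 (a b c e : Fin d) (i : Fin d) : ℕ :=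
  (if a = i then 1 else 0) + (if b = i then 1 else 0)
    + (if c = i then 1 else 0) + (if e = i then 1 else 0)

lemma single_prod (z : Fin d → ℝ) (a : Fin d) :
    ∏ i, z i ^ (if a = i then 1 else 0) = z a := by
  simp [pow_ite, Finset.prod_ite_eq]

lemma prod_eq2 (z : Fin d → ℝ) (a b : Fin d) :
    z a * z b = ∏ i, z i ^ cnt2 a b i := by
  simp_rw [cnt2, pow_add]
  rw [Finset.prod_mul_distrib, single_prod, single_prod]

lemma prod_eq4 (z : Fin d → ℝ) (a b c e : Fin d) :
    z a * z b * z c * z e = ∏ i, z i ^ cnt4 a b c e i := by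
  simp_rw [cnt4, pow_add]
  rw [Finset.prod_mul_distrib, Finset.prod_mul_distrib, Finset.prod_mul_distrib,
    single_prod, single_prod, single_prod, single_prod]

lemma int2 (a b : Fin d) :
    ∫ z, z a * z b ∂(Measure.pi fun _ : Fin d => gaussianReal 0 1) = ∏ i, gm (cnt2 a b i) := by
  simp_rw [prod_eq2]
  exact pi_integral _ fun i t => t ^ cnt2 a b i

lemma int4 (a b c e : Fin d) :
    ∫ z, z a * z b * z c * z e ∂(Measure.pi fun _ : Fin d => gaussianReal 0 1)
      = ∏ i, gm (cnt4 a b c e i) := by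
  simp_rw [prod_eq4]
  exact pi_integral _ fun i t => t ^ cnt4 a b c e i

lemma integrable2 (a b : Fin d) :
    Integrable (fun z : Fin d → ℝ => z a * z b) (Measure.pi fun _ : Fin d => gaussianReal 0 1) := by
  have h := pi_integrable (gaussianReal 0 1) (fun i t => t ^ cnt2 a b i)
    (fun i => integrable_pow_g _)
  simpa [← prod_eq2] using h

lemma integrable4 (a b c e : Fin d) :
    Integrable (fun z : Fin d → ℝ => z a * z b * z c * z e)
      (Measure.pi fun _ : Fin d => gaussianReal 0 1) := by
  have h := pi_integrable (gaussianReal 0 1) (fun i t => t ^ cnt4 a b c e i)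
    (fun i => integrable_pow_g _)
  simpa [← prod_eq4] using h

lemma A_val (a b : Fin d) :
    ∫ z, z a * z b ∂(Measure.pi fun _ : Fin d => gaussianReal 0 1)
      = if a = b then 1 else 0 := by
  rw [int2]
  by_cases h : a = b
  · subst h
    rw [if_pos rfl]
    have key : ∀ i ∈ Finset.univ, gm (cnt2 a a i) = if a = i then (1:ℝ) else 1 := by
      intro i _
      unfold cnt2
      rcases eq_or_ne a i with h' | h'
      · simp [h', gm_two]
      · simp [h', gm_zero]
    rw [Finset.prod_congr rfl key]
    simp
  · rw [if_neg h]
    refine Finset.prod_eq_zero (Finset.mem_univ a) ?_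
    unfold cnt2
    simp [Ne.symm h, gm_one]

lemma W_val (a b c e : Fin d) :
    ∫ z, z a * z b * z c * z e ∂(Measure.pi fun _ : Fin d => gaussianReal 0 1)
      = (if a = b then (1:ℝ) else 0) * (if c = e then 1 else 0)
        + (if a = c then 1 else 0) * (if b = e then 1 else 0)
        + (if a = e then 1 else 0) * (if b = c then 1 else 0) := by
  rw [int4]
  by_cases hab : a = b
  · subst hab
    by_cases hac : a = c
    · subst hac
      by_cases hae : a = e
      · subst hae
        have key : ∀ i ∈ Finset.univ, gm (cnt4 a a a a i) = if a = i then (3:ℝ) else 1 := by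
          intro i _
          unfold cnt4
          rcases eq_or_ne a i with h' | h'
          · simp [h', gm_four]
          · simp [h', gm_zero]
        rw [Finset.prod_congr rfl key, Finset.prod_ite_eq]
        norm_num
      · refine Eq.trans (Finset.prod_eq_zero (Finset.mem_univ e) ?_) ?_
        · unfold cnt4
          simp [hae, gm_one]
        · simp [hae]
    · by_cases hce : c = e
      · subst hce
        have key : ∀ i ∈ Finset.univ, gm (cnt4 a a c c i) = (1:ℝ) := by
          intro i _
          unfold cnt4
          rcases eq_or_ne a i with h1 | h1 <;> rcases eq_or_ne c i with h2 | h2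
          · exact absurd (h1.trans h2.symm) hac
          · simp [h1, h2, gm_two]
          · simp [h1, h2, gm_two]
          · simp [h1, h2, gm_zero]
        rw [Finset.prod_congr rfl key]
        simp [hac]
      · by_cases hae : a = e
        · subst hae
          refine Eq.trans (Finset.prod_eq_zero (Finset.mem_univ c) ?_) ?_
          · unfold cnt4
            simp [hac, Ne.symm hac, gm_one]
          · simp [hac, Ne.symm hac]
        · refine Eq.trans (Finset.prod_eq_zero (Finset.mem_univ c) ?_) ?_
          · unfold cnt4
            simp [hac, Ne.symm hce, gm_one]
          · simp [hac, hce, hae]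
  · by_cases hac : a = c
    · subst hac
      by_cases hbe : b = e
      · subst hbe
        have key : ∀ i ∈ Finset.univ, gm (cnt4 a b a b i) = (1:ℝ) := by
          intro i _
          unfold cnt4
          rcases eq_or_ne a i with h1 | h1 <;> rcases eq_or_ne b i with h2 | h2
          · exact absurd (h1.trans h2.symm) hab
          · simp [h1, h2, gm_two]
          · simp [h1, h2, gm_two]
          · simp [h1, h2, gm_zero]
        rw [Finset.prod_congr rfl key]
        simp [hab, Ne.symm hab]
      · refine Eq.trans (Finset.prod_eq_zero (Finset.mem_univ b) ?_) ?_
        · unfold cnt4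
          simp [hab, Ne.symm hbe, gm_one]
        · simp [hab, hbe, Ne.symm hab]
    · by_cases hae : a = e
      · subst hae
        by_cases hbc : b = c
        · subst hbc
          have key : ∀ i ∈ Finset.univ, gm (cnt4 a b b a i) = (1:ℝ) := by
            intro i _
            unfold cnt4
            rcases eq_or_ne a i with h1 | h1 <;> rcases eq_or_ne b i with h2 | h2
            · exact absurd (h1.trans h2.symm) hab
            · simp [h1, h2, gm_two]
            · simp [h1, h2, gm_two]
            · simp [h1, h2, gm_zero]
          rw [Finset.prod_congr rfl key]
          simp [hab, hac]
        · refine Eq.trans (Finset.prod_eq_zero (Finset.mem_univ b) ?_) ?_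
          · unfold cnt4
            simp [hab, Ne.symm hbc, gm_one]
          · simp [hab, hac, hbc]
      · refine Eq.trans (Finset.prod_eq_zero (Finset.mem_univ a) ?_) ?_
        · unfold cnt4
          simp [Ne.symm hab, Ne.symm hac, Ne.symm hae, gm_one]
        · simp [hab, hac, hae]


variable {d C : ℕ}

lemma key_fact (i k : Fin C) (a j b l : Fin d) (y : Fin C → Fin d → ℝ) :
    y i a * y i j * y k b * y k l
      = ∏ m, ((if i = m then y m a * y m j else 1) * (if k = m then y m b * y m l else 1)) := by
  rw [Finset.prod_mul_distrib, Finset.prod_ite_eq, Finset.prod_ite_eq]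
  simp only [Finset.mem_univ, if_true]
  ring

lemma T_val (i k : Fin C) (a j b l : Fin d) :
    ∫ y : Fin C → Fin d → ℝ, y i a * y i j * y k b * y k l
        ∂(Measure.pi fun _ : Fin C => Measure.pi fun _ : Fin d => gaussianReal 0 1)
      = if i = k then
          ((if a = j then (1:ℝ) else 0) * (if b = l then 1 else 0)
            + (if a = b then 1 else 0) * (if j = l then 1 else 0)
            + (if a = l then 1 else 0) * (if j = b then 1 else 0))
        else (if a = j then 1 else 0) * (if b = l then 1 else 0) := by
  simp_rw [key_fact i k a j b l]
  rw [pi_integral (Measure.pi fun _ : Fin d => gaussianReal 0 1)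
    (fun m (z : Fin d → ℝ) => (if i = m then z a * z j else 1) * (if k = m then z b * z l else 1))]
  by_cases hik : i = k
  · subst hik
    rw [if_pos rfl]
    have step : ∀ m ∈ Finset.univ,
        (∫ z : Fin d → ℝ, (if i = m then z a * z j else 1) * (if i = m then z b * z l else 1)
          ∂(Measure.pi fun _ : Fin d => gaussianReal 0 1))
        = if i = m then
            ((if a = j then (1:ℝ) else 0) * (if b = l then 1 else 0)
              + (if a = b then 1 else 0) * (if j = l then 1 else 0)
              + (if a = l then 1 else 0) * (if j = b then 1 else 0))
          else 1 := by
      intro m _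
      rcases eq_or_ne i m with h | h
      · subst h
        simp only [eq_self_iff_true, if_true]
        have e : ∀ z : Fin d → ℝ, (z a * z j) * (z b * z l) = z a * z j * z b * z l :=
          fun z => by ring
        simp_rw [e]
        exact W_val a j b l
      · simp [h]
    rw [Finset.prod_congr rfl step, Finset.prod_ite_eq]
    simp
  · rw [if_neg hik]
    have step : ∀ m ∈ Finset.univ,
        (∫ z : Fin d → ℝ, (if i = m then z a * z j else 1) * (if k = m then z b * z l else 1)
          ∂(Measure.pi fun _ : Fin d => gaussianReal 0 1))
        = (if i = m then (if a = j then (1:ℝ) else 0) else 1)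
            * (if k = m then (if b = l then (1:ℝ) else 0) else 1) := by
      intro m _
      rcases eq_or_ne i m with h1 | h1 <;> rcases eq_or_ne k m with h2 | h2
      · exact absurd (h1.trans h2.symm) hik
      · subst h1
        simp only [eq_self_iff_true, if_true, if_neg h2, mul_one]
        exact A_val a j
      · subst h2
        simp only [eq_self_iff_true, if_true, if_neg h1, one_mul]
        exact A_val b l
      · simp [h1, h2]
    rw [Finset.prod_congr rfl step, Finset.prod_mul_distrib, Finset.prod_ite_eq,
      Finset.prod_ite_eq]
    simp


lemma integrable_mono (i k : Fin C) (a j b l : Fin d) :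
    Integrable (fun y : Fin C → Fin d → ℝ => y i a * y i j * y k b * y k l)
      (Measure.pi fun _ : Fin C => Measure.pi fun _ : Fin d => gaussianReal 0 1) := by
  have h := pi_integrable (Measure.pi fun _ : Fin d => gaussianReal 0 1)
    (fun m (z : Fin d → ℝ) => (if i = m then z a * z j else 1) * (if k = m then z b * z l else 1))
    (fun m => ?_)
  · rw [show (fun y : Fin C → Fin d → ℝ => y i a * y i j * y k b * y k l)
      = (fun y => ∏ m, ((if i = m then y m a * y m j else 1) * (if k = m then y m b * y m l else 1)))
      from funext (key_fact i k a j b l)]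
    exact h
  · rcases eq_or_ne i m with h1 | h1 <;> rcases eq_or_ne k m with h2 | h2
    · subst h1; subst h2
      simp only [eq_self_iff_true, if_true]
      have e : ∀ z : Fin d → ℝ, (z a * z j) * (z b * z l) = z a * z j * z b * z l :=
        fun z => by ring
      simp_rw [e]
      exact integrable4 a j b l
    · subst h1
      simp only [eq_self_iff_true, if_true, if_neg h2, mul_one]
      exact integrable2 a j
    · subst h2
      simp only [eq_self_iff_true, if_true, if_neg h1, one_mul]
      exact integrable2 b l
    · simp only [if_neg h1, if_neg h2, mul_one]
      exact integrable_const 1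


end Stmt18Aux
end

open Stmt18Aux in
/-- If `x_1, …, x_C` are i.i.d. standard Gaussian vectors in `ℝ^d`
(`d, C ≥ 1`) and `w ∈ ℝ^d` is fixed, then for every `j ∈ {1,…,d}`:
`E[(∑_i (wᵀx_i)·x_i[j]) · (∑_k x_k x_kᵀ)·w] = C(C+1)·w[j]·w + C·‖w‖²·e_j`
(coordinatewise), where `e_j` is the `j`-th standard basis vector and
`(∑_k x_k x_kᵀ) w = ∑_k (x_kᵀ w) x_k`. -/
theorem stmt_18 (d C : ℕ) (hd : 1 ≤ d) (hC : 1 ≤ C) (w : EuclideanSpace ℝ (Fin d))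
    {Ω : Type*} [MeasureSpace Ω] [IsProbabilityMeasure (ℙ : Measure Ω)]
    (x : Ω → Fin C → Fin d → ℝ) (hx : Measurable x)
    (hlaw : Measure.map x ℙ =
      Measure.pi fun _ : Fin C => Measure.pi fun _ : Fin d => gaussianReal 0 1)
    (j : Fin d) :
    ∀ l : Fin d,
      ∫ ω, (∑ i : Fin C, ((fun a => w a) ⬝ᵥ x ω i) * x ω i j) *
          ((∑ k : Fin C, vecMulVec (x ω k) (x ω k)).mulVec (fun a => w a) l) =
        (C : ℝ) * ((C : ℝ) + 1) * w j * w l +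
          (C : ℝ) * ‖w‖ ^ 2 * (Pi.single j 1 : Fin d → ℝ) l := by
  intro l
  -- Step 1: the integrand, as a function of `y = x ω`, expanded into monomials
  have Gexp : ∀ y : Fin C → Fin d → ℝ,
      (∑ i : Fin C, ((fun a => w a) ⬝ᵥ y i) * y i j) *
          ((∑ k : Fin C, vecMulVec (y k) (y k)).mulVec (fun a => w a) l)
      = ∑ b : Fin d, ∑ k : Fin C, ∑ i : Fin C, ∑ a : Fin d,
          w a * w b * (y i a * y i j * y k b * y k l) := by
    intro y
    simp only [Matrix.mulVec, dotProduct, Matrix.sum_apply, Matrix.vecMulVec_apply,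
      Finset.sum_apply]
    simp only [Finset.sum_mul, Finset.mul_sum]
    refine Finset.sum_congr rfl fun b _ => Finset.sum_congr rfl fun k _ =>
      Finset.sum_congr rfl fun i _ => Finset.sum_congr rfl fun a _ => by ring
  simp_rw [Gexp]
  -- Step 2: change of variables to the product Gaussian measure
  have hGm : AEStronglyMeasurable
      (fun y : Fin C → Fin d → ℝ => ∑ b : Fin d, ∑ k : Fin C, ∑ i : Fin C, ∑ a : Fin d,
        w a * w b * (y i a * y i j * y k b * y k l))
      (Measure.map x ℙ) := by
    refine Measurable.aestronglyMeasurable ?_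
    refine Finset.measurable_sum _ fun b _ => Finset.measurable_sum _ fun k _ =>
      Finset.measurable_sum _ fun i _ => Finset.measurable_sum _ fun a _ => ?_
    fun_prop
  have h1 := (integral_map hx.aemeasurable hGm).symm
  rw [hlaw] at h1
  refine Eq.trans h1 ?_
  -- Step 3: exchange integral and sums
  have hint4 : ∀ (i k : Fin C) (a b : Fin d),
      Integrable (fun y : Fin C → Fin d → ℝ => w a * w b * (y i a * y i j * y k b * y k l))
        (Measure.pi fun _ : Fin C => Measure.pi fun _ : Fin d => gaussianReal 0 1) :=
    fun i k a b => (integrable_mono i k a j b l).const_mul _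
  rw [integral_finset_sum _ fun b _ => integrable_finset_sum _ fun k _ =>
    integrable_finset_sum _ fun i _ => integrable_finset_sum _ fun a _ => hint4 i k a b]
  have step1 : ∀ b ∈ (Finset.univ : Finset (Fin d)),
      (∫ y : Fin C → Fin d → ℝ, ∑ k : Fin C, ∑ i : Fin C, ∑ a : Fin d,
          w a * w b * (y i a * y i j * y k b * y k l)
        ∂(Measure.pi fun _ : Fin C => Measure.pi fun _ : Fin d => gaussianReal 0 1))
      = ∑ k : Fin C, ∑ i : Fin C, ∑ a : Fin d,
          w a * w b * (if i = k then
            ((if a = j then (1:ℝ) else 0) * (if b = l then 1 else 0)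
              + (if a = b then 1 else 0) * (if j = l then 1 else 0)
              + (if a = l then 1 else 0) * (if j = b then 1 else 0))
          else (if a = j then 1 else 0) * (if b = l then 1 else 0)) := by
    intro b _
    rw [integral_finset_sum _ fun k _ => integrable_finset_sum _ fun i _ =>
      integrable_finset_sum _ fun a _ => hint4 i k a b]
    refine Finset.sum_congr rfl fun k _ => ?_
    rw [integral_finset_sum _ fun i _ => integrable_finset_sum _ fun a _ => hint4 i k a b]
    refine Finset.sum_congr rfl fun i _ => ?_
    rw [integral_finset_sum _ fun a _ => hint4 i k a b]
    refine Finset.sum_congr rfl fun a _ => ?_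
    rw [integral_const_mul, T_val i k a j b l]
  rw [Finset.sum_congr rfl step1]
  -- Step 4: pure arithmetic with Kronecker deltas
  have hcount : ∀ (k : Fin C) (X Y : ℝ), (∑ i : Fin C, if i = k then X else Y)
      = X + ((C:ℝ) - 1) * Y := by
    intro k X Y
    have h1 : ∀ i : Fin C, (if i = k then X else Y) = (if i = k then X - Y else 0) + Y :=
      fun i => by split_ifs <;> ring
    rw [Finset.sum_congr rfl fun i _ => h1 i, Finset.sum_add_distrib, Finset.sum_ite_eq',
      Finset.sum_const, Finset.card_univ, Fintype.card_fin]
    simp only [Finset.mem_univ, if_true, nsmul_eq_mul]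
    ring
  have steps : ∀ (b : Fin d) (k : Fin C),
      (∑ i : Fin C, ∑ a : Fin d,
        w a * w b * (if i = k then
            ((if a = j then (1:ℝ) else 0) * (if b = l then 1 else 0)
              + (if a = b then 1 else 0) * (if j = l then 1 else 0)
              + (if a = l then 1 else 0) * (if j = b then 1 else 0))
          else (if a = j then 1 else 0) * (if b = l then 1 else 0)))
      = (∑ a : Fin d, w a * w b *
            ((if a = j then (1:ℝ) else 0) * (if b = l then 1 else 0)
              + (if a = b then 1 else 0) * (if j = l then 1 else 0)
              + (if a = l then 1 else 0) * (if j = b then 1 else 0)))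
        + ((C:ℝ) - 1) * ∑ a : Fin d,
            w a * w b * ((if a = j then (1:ℝ) else 0) * (if b = l then 1 else 0)) := by
    intro b k
    have swap : ∀ i : Fin C,
        (∑ a : Fin d, w a * w b * (if i = k then
            ((if a = j then (1:ℝ) else 0) * (if b = l then 1 else 0)
              + (if a = b then 1 else 0) * (if j = l then 1 else 0)
              + (if a = l then 1 else 0) * (if j = b then 1 else 0))
          else (if a = j then 1 else 0) * (if b = l then 1 else 0)))
        = if i = k then
            (∑ a : Fin d, w a * w b *
              ((if a = j then (1:ℝ) else 0) * (if b = l then 1 else 0)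
                + (if a = b then 1 else 0) * (if j = l then 1 else 0)
                + (if a = l then 1 else 0) * (if j = b then 1 else 0)))
          else (∑ a : Fin d, w a * w b * ((if a = j then (1:ℝ) else 0) * (if b = l then 1 else 0))) := by
      intro i
      split_ifs <;> rfl
    rw [Finset.sum_congr rfl fun i _ => swap i, hcount]
  rw [Finset.sum_congr rfl fun b _ => Finset.sum_congr rfl fun k _ => steps b k]
  -- evaluate the inner a-sums
  have hW : ∀ b : Fin d,
      (∑ a : Fin d, w a * w b *
          ((if a = j then (1:ℝ) else 0) * (if b = l then 1 else 0)
            + (if a = b then 1 else 0) * (if j = l then 1 else 0)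
            + (if a = l then 1 else 0) * (if j = b then 1 else 0)))
      = w j * w b * (if b = l then (1:ℝ) else 0) + w b * w b * (if j = l then 1 else 0)
          + w l * w b * (if j = b then 1 else 0) := by
    intro b
    have hp : ∀ (c : Fin d) (Q : ℝ),
        (∑ a : Fin d, w a * w b * ((if a = c then (1:ℝ) else 0) * Q)) = w c * w b * Q := by
      intro c Q
      rw [Finset.sum_congr rfl (fun a _ =>
        show w a * w b * ((if a = c then (1:ℝ) else 0) * Q) = if a = c then w a * w b * Q else 0
        from by split_ifs <;> ring), Finset.sum_ite_eq']
      simp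
    simp only [mul_add]
    rw [Finset.sum_add_distrib, Finset.sum_add_distrib, hp j, hp b, hp l]
  have hD : ∀ b : Fin d,
      (∑ a : Fin d, w a * w b * ((if a = j then (1:ℝ) else 0) * (if b = l then 1 else 0)))
      = w j * w b * (if b = l then (1:ℝ) else 0) := by
    intro b
    rw [Finset.sum_congr rfl (fun a _ =>
      show w a * w b * ((if a = j then (1:ℝ) else 0) * (if b = l then 1 else 0))
        = if a = j then w a * w b * (if b = l then (1:ℝ) else 0) else 0
      from by split_ifs <;> ring), Finset.sum_ite_eq']
    simp
  rw [Finset.sum_congr rfl fun b _ => Finset.sum_congr rfl fun k _ => by rw [hW b, hD b]]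
  -- the k-sum is constant
  rw [Finset.sum_congr rfl fun b (_ : b ∈ Finset.univ) => by
    rw [Finset.sum_const, Finset.card_univ, Fintype.card_fin, nsmul_eq_mul]]
  rw [← Finset.mul_sum]
  -- now compute the b-sum
  rw [Finset.sum_add_distrib, Finset.sum_add_distrib, Finset.sum_add_distrib]
  have hb1 : (∑ b : Fin d, w j * w b * (if b = l then (1:ℝ) else 0)) = w j * w l := by
    rw [Finset.sum_congr rfl (fun b _ =>
      show w j * w b * (if b = l then (1:ℝ) else 0) = if b = l then w j * w b else 0
      from by split_ifs <;> ring), Finset.sum_ite_eq']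
    simp
  have hb2 : (∑ b : Fin d, w b * w b * (if j = l then (1:ℝ) else 0))
      = (∑ b : Fin d, w b * w b) * (if j = l then (1:ℝ) else 0) := by
    rw [Finset.sum_mul]
  have hb3 : (∑ b : Fin d, w l * w b * (if j = b then (1:ℝ) else 0)) = w l * w j := by
    rw [Finset.sum_congr rfl (fun b _ =>
      show w l * w b * (if j = b then (1:ℝ) else 0) = if j = b then w l * w b else 0
      from by split_ifs <;> ring), Finset.sum_ite_eq]
    simp
  have hb4 : (∑ b : Fin d, ((C:ℝ) - 1) * (w j * w b * (if b = l then (1:ℝ) else 0)))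
      = ((C:ℝ) - 1) * (w j * w l) := by
    rw [← Finset.mul_sum, hb1]
  rw [hb1, hb2, hb3, hb4]
  have hnorm : (∑ b : Fin d, w b * w b) = ‖w‖ ^ 2 := by
    rw [EuclideanSpace.norm_eq, Real.sq_sqrt (by positivity)]
    exact Finset.sum_congr rfl fun b _ => by rw [Real.norm_eq_abs, sq_abs, sq]
  rw [hnorm, Pi.single_apply]
  by_cases hjl : j = l
  · subst hjl
    simp only [if_pos rfl]
    ring
  · rw [if_neg hjl, if_neg (fun h => hjl h.symm)]
    ring
end
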